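/- arXiv:2008.03575 — 4 statements merged into one kernel-verified Lean document; each statement's English description precedes it below -/
import Mathlib

section
/- For every positive integer n, T_n = (n/2) · Σ_{k=0}^{⌊n/2⌋} ((−1)^k · 2^{n−2k} / (n−k)) · C(n−k, k) · X^{n−2k}, where C denotes the binomial coefficient. -/
/-!
Expanding the recurrence `U_{n+2} = 2X U_{n+1} - U_n` with Pascal's rule gives
`U_n = ∑_k (-1)^k C(n-k, k) (2X)^(n-2k)`. Since `T_n = U_n - X U_{n-1}`, the coefficient of
`X^(n-2k)` in `T_n` is `(-1)^k 2^(n-2k-1) (2 C(n-k, k) - C(n-1-k, k))`, and this is the claimed one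
because `(n-k) C(n-1-k, k) = (n-2k) C(n-k, k)`.
-/

open Polynomial Polynomial.Chebyshev Finset

lemma Nat.choose_succ_sub_succ (n k : ℕ) :
    (n + 1 - k).choose (k + 1) = (n - k).choose k + (n - k).choose (k + 1) := by
  rcases le_or_gt k n with h | h
  · rw [show n + 1 - k = n - k + 1 by omega, Nat.choose_succ_succ']
  · simp [show n + 1 - k = 0 by omega, show n - k = 0 by omega,
      Nat.choose_eq_zero_of_lt (show 0 < k by omega)]

namespace Polynomial.Chebyshev

section CommRing

variable {R : Type*} [CommRing R]

/-- The `k`-th term of `S_n(x) = ∑_k (-1)^k C(n-k, k) x^(n-2k)`. It vanishes for `2k > n`, which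
makes the truncated exponent harmless and lets any long enough range of `k` serve. -/
noncomputable def sSummand (x : R) (n k : ℕ) : R :=
  (-1) ^ k * ((n - k).choose k : R) * x ^ (n - 2 * k)

@[simp]
lemma sSummand_zero_right (x : R) (n : ℕ) : sSummand x n 0 = x ^ n := by
  simp [sSummand]

lemma sSummand_eq_zero_of_lt (x : R) {n k : ℕ} (h : n < 2 * k) : sSummand x n k = 0 := by
  rw [sSummand, Nat.choose_eq_zero_of_lt (by omega), Nat.cast_zero, mul_zero, zero_mul]

lemma sSummand_add_two_succ (x : R) (n k : ℕ) :
    sSummand x (n + 2) (k + 1) = x * sSummand x (n + 1) (k + 1) - sSummand x n k := by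
  simp only [sSummand, show n + 2 - (k + 1) = n + 1 - k by omega,
    show n + 2 - 2 * (k + 1) = n - 2 * k by omega, show n + 1 - (k + 1) = n - k by omega,
    Nat.choose_succ_sub_succ, Nat.cast_add]
  rcases lt_or_ge (2 * k) n with h | h
  · rw [show n - 2 * k = n + 1 - 2 * (k + 1) + 1 by omega, pow_succ]
    ring
  · rw [Nat.choose_eq_zero_of_lt (show n - k < k + 1 by omega)]
    ring

theorem U_eq_sum_sSummand (n N : ℕ) (hN : n < 2 * N) :
    U R n = ∑ k ∈ range N, sSummand (2 * X) n k := by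
  induction n using Nat.twoStepInduction generalizing N with
  | zero =>
    rw [sum_eq_single 0 (fun k _ hk => sSummand_eq_zero_of_lt _ (by omega)) (by simp; omega)]
    simp
  | one =>
    rw [sum_eq_single 0 (fun k _ hk => sSummand_eq_zero_of_lt _ (by omega)) (by simp; omega)]
    simp
  | more n ih₀ ih₁ =>
    obtain ⟨M, rfl⟩ : ∃ M, N = M + 1 := ⟨N - 1, by omega⟩
    have h₀ := ih₀ M (by omega)
    have h₁ := ih₁ (M + 1) (by omega)
    rw [sum_range_succ'] at h₁
    rw [sum_range_succ']
    simp only [sSummand_add_two_succ, sum_sub_distrib, ← mul_sum, sSummand_zero_right]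
    push_cast at h₁ ⊢
    rw [U_add_two, h₀, h₁, sSummand_zero_right]
    ring

lemma sSummand_two_mul_X (n k : ℕ) :
    sSummand (2 * X : R[X]) n k =
      Polynomial.C ((-1) ^ k * ((n - k).choose k : R) * 2 ^ (n - 2 * k)) * X ^ (n - 2 * k) := by
  simp only [sSummand, mul_pow, map_mul, map_pow, map_neg, map_one, map_natCast, map_ofNat]
  ring

end CommRing

lemma sSummand_two_mul_X_sub_X_mul {K : Type*} [Field K] [CharZero K] (n k : ℕ)
    (hk : 2 * k ≤ n + 1) :
    sSummand (2 * X : K[X]) (n + 1) k - X * sSummand (2 * X) n k =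
      Polynomial.C (((n + 1 : ℕ) : K) / 2) *
        (Polynomial.C ((-1) ^ k * 2 ^ (n + 1 - 2 * k) / (((n + 1 : ℕ) : K) - k) *
          ((n + 1 - k).choose k : K)) * X ^ (n + 1 - 2 * k)) := by
  rw [sSummand_two_mul_X, sSummand_two_mul_X]
  rcases hk.lt_or_eq with hlt | heq
  · have key := Nat.choose_mul_succ_eq (n - k) k
    rw [show n - k + 1 = n + 1 - k by omega, show n + 1 - k - k = n + 1 - 2 * k by omega] at key
    have key' := congrArg (Nat.cast : ℕ → K) key
    push_cast [Nat.cast_sub (show k ≤ n + 1 by omega), Nat.cast_sub hk] at key'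
    have hne : ((n + 1 : ℕ) : K) - k ≠ 0 := by
      rw [sub_ne_zero]
      exact_mod_cast (show n + 1 ≠ k by omega)
    have coeff : (-1) ^ k * ((n + 1 - k).choose k : K) * (2 ^ (n - 2 * k) * 2) -
        (-1) ^ k * ((n - k).choose k : K) * 2 ^ (n - 2 * k) =
        ((n + 1 : ℕ) : K) / 2 * ((-1) ^ k * (2 ^ (n - 2 * k) * 2) / (((n + 1 : ℕ) : K) - k) *
          ((n + 1 - k).choose k : K)) := by
      push_cast at hne ⊢
      field_simp
      linear_combination -key'
    rw [show n + 1 - 2 * k = n - 2 * k + 1 by omega, pow_succ, pow_succ,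
      ← mul_assoc (Polynomial.C (((n + 1 : ℕ) : K) / 2)), ← Polynomial.C_mul, ← coeff,
      Polynomial.C_sub]
    ring
  · obtain ⟨j, rfl, rfl⟩ : ∃ j, k = j + 1 ∧ n = 2 * j + 1 := ⟨k - 1, by omega, by omega⟩
    rw [show 2 * j + 1 + 1 - 2 * (j + 1) = 0 by omega, show 2 * j + 1 + 1 - (j + 1) = j + 1 by omega,
      show 2 * j + 1 - (j + 1) = j by omega, Nat.choose_self,
      Nat.choose_eq_zero_of_lt (Nat.lt_succ_self j)]
    simp only [Nat.cast_zero, Nat.cast_one, mul_zero, zero_mul, map_zero, sub_zero, pow_zero,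
      mul_one, ← Polynomial.C_mul]
    congr 1
    push_cast
    rw [show 2 * (j : K) + 1 + 1 - (j + 1) = j + 1 by ring]
    field_simp
    ring

end Polynomial.Chebyshev

theorem chebyshev_T_explicit (n : ℕ) (hn : 0 < n) :
    T ℚ n = C ((n : ℚ) / 2) *
      ∑ k ∈ Finset.range (n / 2 + 1),
        C ((-1 : ℚ) ^ k * 2 ^ (n - 2 * k) / (n - k) * (Nat.choose (n - k) k)) *
          X ^ (n - 2 * k) := by
  obtain ⟨m, rfl⟩ : ∃ m, n = m + 1 := ⟨n - 1, by omega⟩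
  have hU : U ℚ (((m + 1 : ℕ) : ℤ) - 1) = U ℚ m := by simp
  rw [T_eq_U_sub_X_mul_U, hU, U_eq_sum_sSummand (m + 1) ((m + 1) / 2 + 1) (by omega),
    U_eq_sum_sSummand m ((m + 1) / 2 + 1) (by omega), mul_sum, ← sum_sub_distrib, mul_sum]
  exact sum_congr rfl fun k hk =>
    sSummand_two_mul_X_sub_X_mul m k (by have := mem_range.mp hk; omega)
end

section
/- For every positive integer n: if n is even then T_n has no rational root, and if n is odd then 0 is the only rational root of T_n. -/
open Polynomial Polynomial.Chebyshev

noncomputable instance : Invertible (2 : ℚ) := invertibleOfNonzero two_ne_zero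

-- eval recurrence
private lemma drec (c : ℚ) (m : ℕ) :
    (dickson 1 (1:ℚ) (m+2)).eval c
      = c * (dickson 1 (1:ℚ) (m+1)).eval c - (dickson 1 (1:ℚ) m).eval c := by
  rw [dickson_add_two]; simp

private lemma d0 (c : ℚ) : (dickson 1 (1:ℚ) 0).eval c = 2 := by
  rw [dickson_zero]; norm_num

private lemma d1 (c : ℚ) : (dickson 1 (1:ℚ) 1).eval c = c := by
  rw [dickson_one]; simp

-- relation to Chebyshev T
private lemma dickson_eval_two_mul (n : ℕ) (q : ℚ) :
    (dickson 1 (1:ℚ) n).eval (2*q) = 2 * (T ℚ n).eval q := by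
  have h := chebyshev_T_eq_dickson_one_one ℚ n
  have h2 : (⅟(2:ℚ)) = (2:ℚ)⁻¹ := invOf_eq_inv 2
  have := congrArg (fun p => Polynomial.eval q p) h
  simp only [eval_mul, eval_C, eval_comp, eval_ofNat, eval_X, h2] at this
  rw [this]; ring

-- growth: no roots with |x| > 2
private lemma dickson_grow (x : ℚ) (hx : 2 < |x|) : ∀ n : ℕ,
    0 < |(dickson 1 (1:ℚ) n).eval x| ∧
    |(dickson 1 (1:ℚ) n).eval x| ≤ |(dickson 1 (1:ℚ) (n+1)).eval x| := by
  intro n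
  induction n with
  | zero =>
    rw [d0, d1]
    have h2 : |(2:ℚ)| = 2 := by norm_num
    constructor <;> [norm_num; linarith]
  | succ m ih =>
    obtain ⟨h1, h2⟩ := ih
    refine ⟨lt_of_lt_of_le h1 h2, ?_⟩
    rw [drec]
    have habs : |x * (dickson 1 (1:ℚ) (m+1)).eval x| - |(dickson 1 (1:ℚ) m).eval x|
        ≤ |x * (dickson 1 (1:ℚ) (m+1)).eval x - (dickson 1 (1:ℚ) m).eval x| :=
      abs_sub_abs_le_abs_sub _ _
    rw [abs_mul] at habs
    nlinarith [abs_nonneg ((dickson 1 (1:ℚ) (m+1)).eval x)]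

private lemma dickson_ne_zero_of_big (x : ℚ) (hx : 2 < |x|) (n : ℕ) :
    (dickson 1 (1:ℚ) n).eval x ≠ 0 := by
  have := (dickson_grow x hx n).1
  intro h; rw [h] at this; simp at this

-- monic
private lemma dickson_monic : ∀ n : ℕ,
    (dickson 1 (1:ℤ) (n+1)).Monic ∧
    (dickson 1 (1:ℤ) (n+1)).degree = ((n+1 : ℕ) : WithBot ℕ) ∧
    (dickson 1 (1:ℤ) n).degree ≤ ((n : ℕ) : WithBot ℕ) := by
  intro n
  induction n with
  | zero =>
    refine ⟨by simpa using monic_X, by simpa using degree_X, ?_⟩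
    have h0 : dickson 1 (1:ℤ) 0 = C 2 := by rw [dickson_zero]; norm_num
    rw [h0]; exact degree_C_le
  | succ m ih =>
    obtain ⟨hm, hd, hd0⟩ := ih
    have hXd : (X * dickson 1 (1:ℤ) (m+1)).Monic := monic_X.mul hm
    have hdegX : (X * dickson 1 (1:ℤ) (m+1)).degree = ((m+2 : ℕ) : WithBot ℕ) := by
      rw [degree_mul, degree_X, hd]
      push_cast
      ring
    have hlt : (C (1:ℤ) * dickson 1 (1:ℤ) (m+1)).degree
        < (X * dickson 1 (1:ℤ) (m+1)).degree := by
      rw [C_1, one_mul, hdegX, hd]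
      exact_mod_cast Nat.lt_succ_self (m+1)
    have heq : dickson 1 (1:ℤ) (m+2) = X * dickson 1 (1:ℤ) (m+1) - C 1 * dickson 1 (1:ℤ) (m+1-1) := by
      simpa using dickson_add_two 1 (1:ℤ) m
    have hlt' : (C (1:ℤ) * dickson 1 (1:ℤ) m).degree < (X * dickson 1 (1:ℤ) (m+1)).degree := by
      rw [C_1, one_mul, hdegX]
      refine lt_of_le_of_lt hd0 ?_
      exact_mod_cast Nat.lt_add_of_pos_right (by norm_num)
    refine ⟨?_, ?_, le_of_eq hd⟩
    · rw [show m + 1 + 1 = m + 2 from rfl, dickson_add_two]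
      exact hXd.sub_of_left hlt'
    · rw [show m + 1 + 1 = m + 2 from rfl, dickson_add_two,
        degree_sub_eq_left_of_degree_lt hlt', hdegX]

private lemma e_one : ∀ n : ℕ,
    ((dickson 1 (1:ℚ) n).eval 1 = 2 ∧ (dickson 1 (1:ℚ) (n+1)).eval 1 = 1) ∨
    ((dickson 1 (1:ℚ) n).eval 1 = 1 ∧ (dickson 1 (1:ℚ) (n+1)).eval 1 = -1) ∨
    ((dickson 1 (1:ℚ) n).eval 1 = -1 ∧ (dickson 1 (1:ℚ) (n+1)).eval 1 = -2) ∨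
    ((dickson 1 (1:ℚ) n).eval 1 = -2 ∧ (dickson 1 (1:ℚ) (n+1)).eval 1 = -1) ∨
    ((dickson 1 (1:ℚ) n).eval 1 = -1 ∧ (dickson 1 (1:ℚ) (n+1)).eval 1 = 1) ∨
    ((dickson 1 (1:ℚ) n).eval 1 = 1 ∧ (dickson 1 (1:ℚ) (n+1)).eval 1 = 2) := by
  intro n
  induction n with
  | zero => exact Or.inl ⟨d0 1, d1 1⟩
  | succ m ih =>
    rcases ih with ⟨h1,h2⟩|⟨h1,h2⟩|⟨h1,h2⟩|⟨h1,h2⟩|⟨h1,h2⟩|⟨h1,h2⟩ <;>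
      rw [drec 1 m, h1, h2] <;> norm_num

private lemma e_one_ne (n : ℕ) : (dickson 1 (1:ℚ) n).eval 1 ≠ 0 := by
  rcases e_one n with ⟨h,_⟩|⟨h,_⟩|⟨h,_⟩|⟨h,_⟩|⟨h,_⟩|⟨h,_⟩ <;> rw [h] <;> norm_num

private lemma e_negone : ∀ n : ℕ,
    ((dickson 1 (1:ℚ) n).eval (-1) = 2 ∧ (dickson 1 (1:ℚ) (n+1)).eval (-1) = -1) ∨
    ((dickson 1 (1:ℚ) n).eval (-1) = -1 ∧ (dickson 1 (1:ℚ) (n+1)).eval (-1) = -1) ∨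
    ((dickson 1 (1:ℚ) n).eval (-1) = -1 ∧ (dickson 1 (1:ℚ) (n+1)).eval (-1) = 2) := by
  intro n
  induction n with
  | zero => exact Or.inl ⟨d0 (-1), d1 (-1)⟩
  | succ m ih =>
    rcases ih with ⟨h1,h2⟩|⟨h1,h2⟩|⟨h1,h2⟩ <;>
      rw [drec (-1) m, h1, h2] <;> norm_num

private lemma e_negone_ne (n : ℕ) : (dickson 1 (1:ℚ) n).eval (-1) ≠ 0 := by
  rcases e_negone n with ⟨h,_⟩|⟨h,_⟩|⟨h,_⟩ <;> rw [h] <;> norm_num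

private lemma e_two : ∀ n : ℕ, (dickson 1 (1:ℚ) n).eval 2 = 2 ∧ (dickson 1 (1:ℚ) (n+1)).eval 2 = 2 := by
  intro n
  induction n with
  | zero => exact ⟨d0 2, by rw [d1]⟩
  | succ m ih => exact ⟨ih.2, by rw [drec 2 m, ih.1, ih.2]; norm_num⟩

private lemma e_negtwo : ∀ n : ℕ,
    ((dickson 1 (1:ℚ) n).eval (-2) = 2 ∧ (dickson 1 (1:ℚ) (n+1)).eval (-2) = -2) ∨
    ((dickson 1 (1:ℚ) n).eval (-2) = -2 ∧ (dickson 1 (1:ℚ) (n+1)).eval (-2) = 2) := by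
  intro n
  induction n with
  | zero => exact Or.inl ⟨d0 (-2), d1 (-2)⟩
  | succ m ih =>
    rcases ih with ⟨h1,h2⟩|⟨h1,h2⟩ <;> rw [drec (-2) m, h1, h2] <;> norm_num

private lemma e_negtwo_ne (n : ℕ) : (dickson 1 (1:ℚ) n).eval (-2) ≠ 0 := by
  rcases e_negtwo n with ⟨h,_⟩|⟨h,_⟩ <;> rw [h] <;> norm_num

private lemma e_zero : ∀ k : ℕ,
    ((dickson 1 (1:ℚ) (2*k)).eval 0 = 2 ∨ (dickson 1 (1:ℚ) (2*k)).eval 0 = -2) ∧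
    (dickson 1 (1:ℚ) (2*k+1)).eval 0 = 0 := by
  intro k
  induction k with
  | zero => exact ⟨Or.inl (d0 0), d1 0⟩
  | succ m ih =>
    constructor
    · rcases ih.1 with h|h
      · right; rw [show 2*(m+1) = 2*m+2 from by ring, drec 0 (2*m), h]; ring
      · left; rw [show 2*(m+1) = 2*m+2 from by ring, drec 0 (2*m), h]; ring
    · rw [show 2*(m+1)+1 = (2*m+1)+2 from by ring, drec 0 (2*m+1), ih.2]; ring

private lemma e_zero_iff (n : ℕ) : (dickson 1 (1:ℚ) n).eval 0 = 0 ↔ Odd n := by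
  rcases Nat.even_or_odd n with he | ho
  · obtain ⟨k, hk⟩ := he
    have h := (e_zero k).1
    constructor
    · intro h0
      rw [show n = 2*k from by omega] at h0
      rcases h with h|h <;> rw [h] at h0 <;> norm_num at h0
    · intro h0
      exact absurd h0 (Nat.not_odd_iff_even.mpr ⟨k, hk⟩)
  · obtain ⟨k, hk⟩ := ho
    rw [hk]
    simpa using (e_zero k).2

private lemma key (n : ℕ) (hn : 0 < n) (q : ℚ) (h : (T ℚ n).eval q = 0) :
    q = 0 ∧ Odd n := by
  have hd : (dickson 1 (1:ℚ) n).eval (2*q) = 0 := by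
    rw [dickson_eval_two_mul, h]; ring
  have hb : ¬ (2 < |2*q|) := fun hbig => dickson_ne_zero_of_big _ hbig n hd
  obtain ⟨m, rfl⟩ : ∃ m, n = m + 1 := ⟨n - 1, by omega⟩
  have hint : IsIntegral ℤ (2*q) := by
    refine ⟨dickson 1 (1:ℤ) (m+1), (dickson_monic m).1, ?_⟩
    rw [eval₂_eq_eval_map, map_dickson]
    simpa using hd
  obtain ⟨c, hc⟩ := IsIntegrallyClosed.isIntegral_iff.mp hint
  rw [algebraMap_int_eq, eq_intCast] at hc
  have hcabs : -2 ≤ c ∧ c ≤ 2 := by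
    have h1 : |(c:ℚ)| ≤ 2 := by rw [hc]; linarith [le_of_not_gt hb]
    have h2 := abs_le.mp h1
    refine ⟨?_, ?_⟩
    · exact_mod_cast h2.1
    · exact_mod_cast h2.2
  obtain ⟨hc1, hc2⟩ := hcabs
  interval_cases c
  · exfalso
    rw [show (2:ℚ)*q = -2 from by rw [← hc]; norm_num] at hd
    exact e_negtwo_ne _ hd
  · exfalso
    rw [show (2:ℚ)*q = -1 from by rw [← hc]; norm_num] at hd
    exact e_negone_ne _ hd
  · have hq : q = 0 := by
      have : (2:ℚ)*q = 0 := by rw [← hc]; norm_num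
      linarith
    rw [hq] at hd
    rw [show (2:ℚ)*0 = 0 from by ring] at hd
    exact ⟨hq, (e_zero_iff (m+1)).mp hd⟩
  · exfalso
    rw [show (2:ℚ)*q = 1 from by rw [← hc]; norm_num] at hd
    exact e_one_ne _ hd
  · exfalso
    rw [show (2:ℚ)*q = 2 from by rw [← hc]; norm_num] at hd
    exact absurd ((e_two (m+1)).1.symm.trans hd) (by norm_num)

theorem chebyshev_T_rational_roots (n : ℕ) (hn : 0 < n) :
    (Even n → ∀ q : ℚ, (T ℚ n).eval q ≠ 0) ∧
    (Odd n → ∀ q : ℚ, (T ℚ n).eval q = 0 ↔ q = 0) := by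
  constructor
  · intro he q hq
    exact (Nat.not_odd_iff_even.mpr he) (key n hn q hq).2
  · intro ho q
    constructor
    · intro hq; exact (key n hn q hq).1
    · intro hq
      subst hq
      have h1 := dickson_eval_two_mul n 0
      rw [mul_zero, (e_zero_iff n).mpr ho] at h1
      linarith
end

section
/- For every positive integer n, the only possible rational roots of U_n are 0, 1/2 and −1/2; moreover 0 is a root of U_n if and only if n is odd, and 1/2 (equivalently −1/2) is a root of U_n if and only if n ≡ 2 (mod 3). -/
open Polynomial Polynomial.Chebyshev

noncomputable def chebS : ℕ → ℤ[X]
  | 0 => 1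
  | 1 => X
  | (n+2) => X * chebS (n+1) - chebS n

lemma chebS_monic : ∀ n : ℕ, (chebS n).Monic ∧ (chebS n).natDegree = n := by
  intro n
  induction n using Nat.twoStepInduction with
  | zero => exact ⟨monic_one, natDegree_one⟩
  | one => exact ⟨monic_X, natDegree_X⟩
  | more n ih1 ih2 =>
    obtain ⟨hm1, hd1⟩ := ih1
    obtain ⟨hm2, hd2⟩ := ih2
    have hm : (X * chebS (n+1)).Monic := monic_X.mul hm2
    have hd : (X * chebS (n+1)).natDegree = n + 2 := by
      rw [natDegree_X_mul hm2.ne_zero, hd2]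
    have hlt : (chebS n).natDegree < (X * chebS (n+1)).natDegree := by omega
    constructor
    · rw [chebS]
      exact hm.sub_of_left (degree_lt_degree hlt)
    · rw [chebS, natDegree_sub_eq_left_of_natDegree_lt hlt, hd]

lemma U_nat_add_two (q : ℚ) (n : ℕ) :
    ((U ℚ (n+2 : ℕ)).eval q) = 2 * q * (U ℚ (n+1 : ℕ)).eval q - (U ℚ (n : ℕ)).eval q := by
  have h : ((n+2 : ℕ) : ℤ) = (n : ℤ) + 2 := by push_cast; ring
  have h1 : ((n+1 : ℕ) : ℤ) = (n : ℤ) + 1 := by push_cast; ring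
  rw [h, h1, U_add_two]
  simp [mul_assoc]

lemma chebS_eval (n : ℕ) (q : ℚ) :
    (U ℚ (n : ℕ)).eval q = ((chebS n).map (Int.castRingHom ℚ)).eval (2 * q) := by
  induction n using Nat.twoStepInduction with
  | zero => simp [chebS, U_zero]
  | one => simp [chebS, U_one]
  | more n ih1 ih2 =>
    rw [U_nat_add_two, ih1, ih2, chebS]
    simp only [Polynomial.map_sub, Polynomial.map_mul, map_X, eval_sub, eval_mul, eval_X]

lemma U_eval_neg (x : ℚ) : ∀ n : ℕ, (U ℚ (n : ℕ)).eval (-x) = (-1)^n * (U ℚ (n : ℕ)).eval x := by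
  intro n
  induction n using Nat.twoStepInduction with
  | zero => simp [U_zero]
  | one => simp [U_one]
  | more n ih1 ih2 =>
    rw [U_nat_add_two, U_nat_add_two, ih1, ih2]
    ring

lemma U_eval_ge (x : ℚ) (hx : 1 ≤ x) :
    ∀ n : ℕ, 1 ≤ (U ℚ (n : ℕ)).eval x ∧ (U ℚ (n : ℕ)).eval x ≤ (U ℚ (n+1 : ℕ)).eval x := by
  intro n
  induction n with
  | zero =>
    constructor
    · simp [U_zero]
    · show (U ℚ (0:ℕ)).eval x ≤ (U ℚ (1:ℕ)).eval x
      simp [U_zero, U_one]; linarith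
  | succ n ih =>
    obtain ⟨h1, h2⟩ := ih
    have h3 := U_nat_add_two x n
    constructor
    · linarith
    · rw [show n+1+1 = n+2 by ring, h3]
      nlinarith

lemma U_eval_zero_period (n : ℕ) : (U ℚ (n+2 : ℕ)).eval 0 = -(U ℚ (n : ℕ)).eval 0 := by
  rw [U_nat_add_two]; ring

lemma U_eval_zero_iff : ∀ n : ℕ, (U ℚ (n : ℕ)).eval 0 = 0 ↔ Odd n := by
  intro n
  induction n using Nat.twoStepInduction with
  | zero => simp [U_zero]
  | one => simp [U_one, Nat.odd_iff]
  | more n ih1 _ =>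
    rw [U_eval_zero_period, neg_eq_zero, ih1, Nat.odd_iff, Nat.odd_iff]
    omega

lemma U_eval_half_period (n : ℕ) : (U ℚ (n+3 : ℕ)).eval (1/2) = -(U ℚ (n : ℕ)).eval (1/2) := by
  have h1 := U_nat_add_two (1/2 : ℚ) (n+1)
  have h2 := U_nat_add_two (1/2 : ℚ) n
  rw [show n+1+2 = n+3 by ring, show n+1+1 = n+2 by ring] at h1
  rw [h1, h2]; ring

lemma U_eval_neg_half_period (n : ℕ) :
    (U ℚ (n+3 : ℕ)).eval (-(1/2)) = (U ℚ (n : ℕ)).eval (-(1/2)) := by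
  have h1 := U_nat_add_two (-(1/2) : ℚ) (n+1)
  have h2 := U_nat_add_two (-(1/2) : ℚ) n
  rw [show n+1+2 = n+3 by ring, show n+1+1 = n+2 by ring] at h1
  rw [h1, h2]; ring

lemma U_eval_half_iff : ∀ n : ℕ, (U ℚ (n : ℕ)).eval (1/2) = 0 ↔ n % 3 = 2 := by
  intro n
  induction n using Nat.strong_induction_on with
  | _ n ih =>
    match n with
    | 0 => simp [U_zero]
    | 1 => norm_num [U_one]
    | 2 => norm_num [U_two]
    | (m+3) =>
      rw [U_eval_half_period, neg_eq_zero, ih m (by omega)]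
      omega

lemma U_eval_neg_half_iff : ∀ n : ℕ, (U ℚ (n : ℕ)).eval (-(1/2)) = 0 ↔ n % 3 = 2 := by
  intro n
  induction n using Nat.strong_induction_on with
  | _ n ih =>
    match n with
    | 0 => simp [U_zero]
    | 1 => norm_num [U_one]
    | 2 => norm_num [U_two]
    | (m+3) =>
      rw [U_eval_neg_half_period, ih m (by omega)]
      omega

theorem chebyshev_U_rational_roots (n : ℕ) (hn : 0 < n) :
    (∀ q : ℚ, (U ℚ n).eval q = 0 → q = 0 ∨ q = 1 / 2 ∨ q = -(1 / 2)) ∧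
    ((U ℚ n).eval 0 = 0 ↔ Odd n) ∧
    ((U ℚ n).eval (1 / 2) = 0 ↔ n % 3 = 2) ∧
    ((U ℚ n).eval (-(1 / 2)) = 0 ↔ n % 3 = 2) := by
  refine ⟨?_, U_eval_zero_iff n, U_eval_half_iff n, U_eval_neg_half_iff n⟩
  intro q hq
  have hlt : q < 1 := by
    by_contra h
    push_neg at h
    have := (U_eval_ge q h n).1
    rw [hq] at this; linarith
  have hgt : -1 < q := by
    by_contra h
    push_neg at h
    have h1 : (1:ℚ) ≤ -q := by linarith
    have h2 := (U_eval_ge (-q) h1 n).1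
    have h3 := U_eval_neg (-q) n
    rw [neg_neg, hq] at h3
    rcases mul_eq_zero.mp h3.symm with h4 | h4
    · exact pow_ne_zero n (by norm_num : (-1:ℚ) ≠ 0) h4
    · linarith
  have h0 : ((chebS n).map (Int.castRingHom ℚ)).eval (2*q) = 0 := by
    rw [← chebS_eval]; exact hq
  have haev : Polynomial.aeval (2*q) (chebS n) = 0 := by
    rw [aeval_def, eval₂_eq_eval_map, algebraMap_int_eq]; exact h0
  have hint : IsIntegral ℤ (2*q) := ⟨chebS n, (chebS_monic n).1, haev⟩
  obtain ⟨m, hm⟩ := IsIntegrallyClosed.isIntegral_iff.mp hint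
  have hm' : (m:ℚ) = 2*q := by rw [← hm]; simp
  have hb1 : (-2:ℤ) < m := by
    have : (-2:ℚ) < (m:ℚ) := by rw [hm']; linarith
    exact_mod_cast this
  have hb2 : m < 2 := by
    have : (m:ℚ) < 2 := by rw [hm']; linarith
    exact_mod_cast this
  interval_cases m
  · right; right
    have : ((-1:ℤ):ℚ) = 2*q := hm'
    push_cast at this; linarith
  · left
    have : ((0:ℤ):ℚ) = 2*q := hm'
    push_cast at this; linarith
  · right; left
    have : ((1:ℤ):ℚ) = 2*q := hm'
    push_cast at this; linarith
end

section
/- For every positive integer n, the only possible rational root of the shifted Chebyshev polynomial T_n* = T_n(2X − 1) is 1/2. -/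
open Polynomial Polynomial.Chebyshev

theorem shifted_chebyshev_rational_root_general (n : ℕ) (q : ℚ)
    (hq : ((T ℚ n).comp (2 * X - 1)).eval q = 0) : q = 1 / 2 := by
  have hroot : (T ℝ n).IsRoot ((2 * q - 1 : ℚ) : ℝ) := by
    have := congrArg (algebraMap ℚ ℝ) hq
    rwa [eval_comp, algebraMap_eval_T, map_zero, eval_sub, eval_mul, eval_X, eval_ofNat,
      eval_one] at this
  by_contra hne
  refine (irrational_of_isRoot_T_real hroot ?_).ne_rat (2 * q - 1) rfl
  exact_mod_cast fun h : 2 * q - 1 = 0 => hne (by linarith)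

theorem shifted_chebyshev_rational_root (n : ℕ) (hn : 0 < n) (q : ℚ)
    (hq : ((T ℚ n).comp (2 * X - 1)).eval q = 0) : q = 1 / 2 :=
  shifted_chebyshev_rational_root_general n q hq
end
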